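/- arXiv:math/0608177 — 2 statements merged into one kernel-verified Lean document; each statement's English description precedes it below -/
import Mathlib

section
/- This example shows Globevnik's inequality fails without the vanishing hypothesis: for n ≥ 3 and 2 ≤ d ≤ n−1, the map F_d : 𝔻 → Ω_n defined by F_d(ζ) = diag(N_d(ζ), ζ·I_{n−d}) is holomorphic, satisfies r(F_d(0)) = 0 but F_d(0) ≠ 0, and r(F_d(ζ)) > |ζ| for all ζ ∈ 𝔻 \ {0}. -/
open Metric

/-- The spectral radius of a complex `n × n` matrix. -/
noncomputable def sRad {n : ℕ} (A : Matrix (Fin n) (Fin n) ℂ) : ℝ :=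
  sSup ((fun μ => ‖μ‖) '' spectrum ℂ A)

/-- The `n × n` block-diagonal matrix `diag(N_d(ζ), ζ·I_{n-d})`. -/
def Fmat (n d : ℕ) (ζ : ℂ) : Matrix (Fin n) (Fin n) ℂ :=
  Matrix.of fun i j =>
    if (i : ℕ) < d ∧ (j : ℕ) < d then
      (if (i : ℕ) = (j : ℕ) + 1 then 1 else if (i : ℕ) = 0 ∧ (j : ℕ) = d - 1 then ζ else 0)
    else if i = j then ζ else 0

section Aux

lemma Fmat_hi {n d : ℕ} (ζ : ℂ) (i j : Fin n) (h : ¬ (i : ℕ) < d) :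
    Fmat n d ζ i j = if i = j then ζ else 0 := by simp [Fmat, h]

lemma Fmat_mid {n d : ℕ} (ζ : ℂ) (i j : Fin n) (h1 : 1 ≤ (i : ℕ)) (h2 : (i : ℕ) < d) :
    Fmat n d ζ i j = if (i : ℕ) = (j : ℕ) + 1 then 1 else 0 := by
  by_cases hj : (j : ℕ) < d
  · simp only [Fmat, Matrix.of_apply, if_pos (And.intro h2 hj)]
    by_cases hij : (i : ℕ) = (j : ℕ) + 1
    · simp [hij]
    · have : ¬((i:ℕ) = 0 ∧ (j:ℕ) = d - 1) := by omega
      simp [hij, this]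
  · have h3 : ¬((i:ℕ) < d ∧ (j:ℕ) < d) := by omega
    have h4 : i ≠ j := by intro e; exact hj (e ▸ h2)
    have h5 : ¬ (i:ℕ) = (j:ℕ) + 1 := by omega
    simp [Fmat, h3, h4, h5]

lemma Fmat_zero {n d : ℕ} (ζ : ℂ) (hd2 : 2 ≤ d) (i j : Fin n) (h : (i : ℕ) = 0) :
    Fmat n d ζ i j = if (j : ℕ) = d - 1 then ζ else 0 := by
  by_cases hj : (j : ℕ) < d
  · have h1 : (i:ℕ) < d := by omega
    have h2 : ¬ (i:ℕ) = (j:ℕ) + 1 := by omega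
    simp only [Fmat, Matrix.of_apply, if_pos (And.intro h1 hj), if_neg h2]
    by_cases hjd : (j : ℕ) = d - 1
    · simp [hjd, h]
    · simp [hjd, h]
  · have h3 : ¬((i:ℕ) < d ∧ (j:ℕ) < d) := by omega
    have h4 : i ≠ j := by intro e; omega
    have h5 : ¬ (j:ℕ) = d - 1 := by omega
    simp [Fmat, h3, h4, h5]

lemma mulVec_hi {n d : ℕ} (ζ : ℂ) (v : Fin n → ℂ) (i : Fin n) (h : ¬ (i : ℕ) < d) :
    (Fmat n d ζ).mulVec v i = ζ * v i := by
  simp only [Matrix.mulVec, dotProduct]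
  rw [Finset.sum_congr rfl (fun j _ => by rw [Fmat_hi ζ i j h])]
  simp [ite_mul]

lemma mulVec_mid {n d : ℕ} (ζ : ℂ) (v : Fin n → ℂ) (i : Fin n) (h1 : 1 ≤ (i : ℕ))
    (h2 : (i : ℕ) < d) : (Fmat n d ζ).mulVec v i = v ⟨(i : ℕ) - 1, by omega⟩ := by
  simp only [Matrix.mulVec, dotProduct]
  rw [Finset.sum_congr rfl (fun j _ => by rw [Fmat_mid ζ i j h1 h2])]
  rw [Finset.sum_eq_single (⟨(i : ℕ) - 1, by omega⟩ : Fin n)]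
  · rw [if_pos (by simp; omega)]; ring
  · intro j _ hj
    rw [if_neg (fun e => hj (Fin.ext (by simp at e ⊢; omega))), zero_mul]
  · intro hmem; exact absurd (Finset.mem_univ _) hmem

lemma mulVec_zero {n d : ℕ} (ζ : ℂ) (v : Fin n → ℂ) (hd2 : 2 ≤ d) (hdn : d ≤ n)
    (i : Fin n) (h : (i : ℕ) = 0) :
    (Fmat n d ζ).mulVec v i = ζ * v ⟨d - 1, by omega⟩ := by
  simp only [Matrix.mulVec, dotProduct]
  rw [Finset.sum_congr rfl (fun j _ => by rw [Fmat_zero ζ hd2 i j h])]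
  rw [Finset.sum_eq_single (⟨d - 1, by omega⟩ : Fin n)]
  · rw [if_pos (by simp)]
  · intro j _ hj
    rw [if_neg (fun e => hj (Fin.ext (by simpa using e))), zero_mul]
  · intro hmem; exact absurd (Finset.mem_univ _) hmem

lemma mem_spec_iff {n : ℕ} (A : Matrix (Fin n) (Fin n) ℂ) (μ : ℂ) :
    μ ∈ spectrum ℂ A ↔ ∃ v, v ≠ 0 ∧ A.mulVec v = μ • v := by
  rw [spectrum.mem_iff, Matrix.isUnit_iff_isUnit_det, isUnit_iff_ne_zero, not_not,
    ← Matrix.exists_mulVec_eq_zero_iff]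
  constructor <;> rintro ⟨v, hv, h⟩ <;> refine ⟨v, hv, ?_⟩
  · have := h
    rw [Matrix.sub_mulVec, Algebra.algebraMap_eq_smul_one, Matrix.smul_mulVec,
      Matrix.one_mulVec, sub_eq_zero] at this
    exact this.symm
  · rw [Matrix.sub_mulVec, Algebra.algebraMap_eq_smul_one, Matrix.smul_mulVec,
      Matrix.one_mulVec, sub_eq_zero, h]

lemma spec_Fmat (n d : ℕ) (hd2 : 2 ≤ d) (hdn : d < n) (ζ : ℂ) :
    spectrum ℂ (Fmat n d ζ) = {μ : ℂ | μ ^ d = ζ ∨ μ = ζ} := by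
  ext μ
  rw [mem_spec_iff]
  constructor
  · rintro ⟨v, hv, heig⟩
    by_cases hμζ : μ = ζ
    · exact Or.inr hμζ
    refine Or.inl ?_
    -- v vanishes outside the first d coordinates
    have hout : ∀ i : Fin n, ¬ (i : ℕ) < d → v i = 0 := by
      intro i hi
      have h1 : ζ * v i = μ * v i := by
        rw [← mulVec_hi ζ v i hi, heig]; rfl
      by_contra hvi
      exact hμζ (mul_right_cancel₀ hvi h1.symm)
    have hmid : ∀ i : Fin n, 1 ≤ (i : ℕ) → (i : ℕ) < d →
        v ⟨(i : ℕ) - 1, by omega⟩ = μ * v i := by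
      intro i h1 h2
      rw [← mulVec_mid ζ v i h1 h2, heig]; rfl
    have h0 : ζ * v ⟨d - 1, by omega⟩ = μ * v ⟨0, by omega⟩ := by
      rw [← mulVec_zero ζ v hd2 (le_of_lt hdn) ⟨0, by omega⟩ rfl, heig]; rfl
    have claim : ∀ k, k ≤ d - 1 → v ⟨d - 1 - k, by omega⟩ = μ ^ k * v ⟨d - 1, by omega⟩ := by
      intro k
      induction k with
      | zero => intro _; simp
      | succ k ih =>
        intro hk
        have hik := hmid ⟨d - 1 - k, by omega⟩ (by simp; omega) (by simp; omega)
        have e1 : (⟨(d - 1 - k : ℕ) - 1, by omega⟩ : Fin n) = ⟨d - 1 - (k + 1), by omega⟩ :=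
          Fin.ext (by simp; omega)
        rw [e1] at hik
        rw [hik, ih (by omega), pow_succ]; ring
    have hdm1 : v ⟨0, by omega⟩ = μ ^ (d - 1) * v ⟨d - 1, by omega⟩ := by
      have := claim (d - 1) le_rfl
      simpa using this
    have hvd : v ⟨d - 1, by omega⟩ ≠ 0 := by
      intro hz
      apply hv
      funext i
      by_cases hi : (i : ℕ) < d
      · have e2 : i = (⟨d - 1 - (d - 1 - (i : ℕ)), by omega⟩ : Fin n) := Fin.ext (by simp; omega)
        rw [e2, claim (d - 1 - (i : ℕ)) (by omega), hz, mul_zero]; rfl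
      · exact hout i hi
    have : ζ * v ⟨d - 1, by omega⟩ = μ ^ d * v ⟨d - 1, by omega⟩ := by
      rw [h0, hdm1, ← mul_assoc, ← pow_succ']
      congr 2
      omega
    exact (mul_right_cancel₀ hvd this).symm
  · rintro (hroot | hval)
    · -- eigenvector for the root μ
      refine ⟨fun i => if (i : ℕ) < d then μ ^ (d - 1 - (i : ℕ)) else 0, ?_, ?_⟩
      · intro hz
        have := congrFun hz ⟨d - 1, by omega⟩
        simp [Nat.sub_lt (by omega : 0 < d) one_pos] at this
      · funext i
        by_cases hi : (i : ℕ) < d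
        · by_cases h1 : 1 ≤ (i : ℕ)
          · rw [mulVec_mid ζ _ i h1 hi]
            simp only [Pi.smul_apply, smul_eq_mul, if_pos hi, if_pos (show (i:ℕ) - 1 < d by omega)]
            rw [← pow_succ']
            congr 1
            omega
          · have hi0 : (i : ℕ) = 0 := by omega
            rw [mulVec_zero ζ _ hd2 (le_of_lt hdn) i hi0]
            simp only [Pi.smul_apply, smul_eq_mul, hi0, if_pos (show d - 1 < d by omega),
              if_pos (show (0:ℕ) < d by omega), Nat.sub_self, pow_zero, mul_one]
            rw [← hroot, ← pow_succ']
            congr 1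
            omega
        · rw [mulVec_hi ζ _ i hi]
          simp [if_neg hi]
    · -- eigenvector for ζ : e_{n-1}
      refine ⟨fun i => if (i : ℕ) = n - 1 then 1 else 0, ?_, ?_⟩
      · intro hz
        have := congrFun hz ⟨n - 1, by omega⟩
        simp at this
      · funext i
        by_cases hi : (i : ℕ) < d
        · by_cases h1 : 1 ≤ (i : ℕ)
          · rw [mulVec_mid ζ _ i h1 hi]
            have e3 : ¬ ((i : ℕ) - 1 = n - 1) := by omega
            have e4 : ¬ ((i : ℕ) = n - 1) := by omega
            simp [e3, e4]
          · have hi0 : (i : ℕ) = 0 := by omega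
            rw [mulVec_zero ζ _ hd2 (le_of_lt hdn) i hi0]
            have e3 : ¬ (d - 1 = n - 1) := by omega
            have e4 : ¬ ((i : ℕ) = n - 1) := by omega
            simp [e3, e4]
        · rw [mulVec_hi ζ _ i hi]
          simp [hval]


lemma sRad_Fmat (n d : ℕ) (hd2 : 2 ≤ d) (hdn : d < n) (ζ : ℂ) (hζ1 : ‖ζ‖ < 1) (hζ : ζ ≠ 0) :
    sRad (Fmat n d ζ) = ‖ζ‖ ^ ((d : ℝ)⁻¹) := by
  have hd0 : d ≠ 0 := by omega
  set r0 : ℝ := ‖ζ‖ ^ ((d : ℝ)⁻¹) with hr0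
  have hr0nn : 0 ≤ r0 := Real.rpow_nonneg (norm_nonneg ζ) _
  have hr01 : r0 < 1 := Real.rpow_lt_one (norm_nonneg ζ) hζ1 (by positivity)
  have hnorm_root : ∀ μ : ℂ, μ ^ d = ζ → ‖μ‖ = r0 := by
    intro μ hμ
    have h1 : ‖μ‖ ^ d = ‖ζ‖ := by rw [← hμ, norm_pow]
    rw [hr0, ← h1, Real.pow_rpow_inv_natCast (norm_nonneg μ) hd0]
  have hζr0 : ‖ζ‖ ≤ r0 := by
    have h2 : ‖ζ‖ = r0 ^ d := (Real.rpow_inv_natCast_pow (norm_nonneg ζ) hd0).symm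
    calc ‖ζ‖ = r0 ^ d := h2
    _ ≤ r0 ^ 1 := pow_le_pow_of_le_one hr0nn (le_of_lt hr01) (by omega)
    _ = r0 := pow_one r0
  have hbound : ∀ x ∈ (fun μ => ‖μ‖) '' spectrum ℂ (Fmat n d ζ), x ≤ r0 := by
    rintro x ⟨μ, hμ, rfl⟩
    rw [spec_Fmat n d hd2 hdn ζ] at hμ
    rcases hμ with hroot | hval
    · exact le_of_eq (hnorm_root μ hroot)
    · rw [hval]; exact hζr0
  obtain ⟨μ0, hμ0⟩ := IsAlgClosed.exists_pow_nat_eq ζ (n := d) (by omega)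
  apply le_antisymm
  · apply csSup_le
    · exact ⟨‖μ0‖, μ0, by rw [spec_Fmat n d hd2 hdn ζ]; exact Or.inl hμ0, rfl⟩
    · exact hbound
  · apply le_csSup ⟨r0, hbound⟩
    exact ⟨μ0, by rw [spec_Fmat n d hd2 hdn ζ]; exact Or.inl hμ0, hnorm_root μ0 hμ0⟩

lemma sRad_Fmat_zero (n d : ℕ) (hd2 : 2 ≤ d) (hdn : d < n) :
    sRad (Fmat n d 0) = 0 := by
  have hspec : spectrum ℂ (Fmat n d (0 : ℂ)) = {0} := by
    rw [spec_Fmat n d hd2 hdn 0]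
    ext μ
    simp only [Set.mem_setOf_eq, Set.mem_singleton_iff]
    constructor
    · rintro (h | h)
      · exact pow_eq_zero_iff (by omega) |>.mp h
      · exact h
    · rintro rfl; exact Or.inr rfl
  rw [sRad, hspec]
  simp only [Set.image_singleton, norm_zero]
  exact csSup_singleton 0

end Aux

/-- Globevnik's inequality fails without the vanishing hypothesis: for `n ≥ 3` and
`2 ≤ d ≤ n - 1`, the map `F_d : 𝔻 → Ω_n` is holomorphic, `r(F_d(0)) = 0` but
`F_d(0) ≠ 0`, and `r(F_d(ζ)) > |ζ|` for all `ζ ∈ 𝔻 \ {0}`. -/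



theorem stmt5 (n d : ℕ) (hn : 3 ≤ n) (hd2 : 2 ≤ d) (hdn : d ≤ n - 1) :
    (∀ i j : Fin n, DifferentiableOn ℂ (fun ζ => Fmat n d ζ i j) (ball (0 : ℂ) 1)) ∧
    (∀ ζ ∈ ball (0 : ℂ) 1, sRad (Fmat n d ζ) < 1) ∧
    sRad (Fmat n d 0) = 0 ∧ Fmat n d 0 ≠ 0 ∧
    (∀ ζ ∈ ball (0 : ℂ) 1, ζ ≠ 0 → ‖ζ‖ < sRad (Fmat n d ζ)) := by
  have hdn' : d < n := by omega
  refine ⟨?_, ?_, ?_, ?_, ?_⟩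
  · intro i j
    simp only [Fmat, Matrix.of_apply]
    by_cases h1 : (i:ℕ) < d ∧ (j:ℕ) < d
    · by_cases h2 : (i:ℕ) = (j:ℕ) + 1
      · simp only [if_pos h1, if_pos h2]; exact differentiableOn_const _
      · by_cases h3 : (i:ℕ) = 0 ∧ (j:ℕ) = d - 1
        · simp only [if_pos h1, if_neg h2, if_pos h3]; exact differentiableOn_id
        · simp only [if_pos h1, if_neg h2, if_neg h3]; exact differentiableOn_const _
    · by_cases h4 : i = j
      · simp only [if_neg h1, if_pos h4]; exact differentiableOn_id
      · simp only [if_neg h1, if_neg h4]; exact differentiableOn_const _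
  · intro ζ hζb
    rw [mem_ball_zero_iff] at hζb
    by_cases hζ : ζ = 0
    · rw [hζ, sRad_Fmat_zero n d hd2 hdn']; norm_num
    · rw [sRad_Fmat n d hd2 hdn' ζ hζb hζ]
      exact Real.rpow_lt_one (norm_nonneg ζ) hζb (by positivity)
  · exact sRad_Fmat_zero n d hd2 hdn'
  · intro h
    have h1 : Fmat n d (0:ℂ) ⟨1, by omega⟩ ⟨0, by omega⟩ = 0 := by rw [h]; rfl
    have h2 : Fmat n d (0:ℂ) ⟨1, by omega⟩ ⟨0, by omega⟩ = 1 := by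
      rw [Fmat_mid (0:ℂ) _ _ (by simp) (by simp; omega)]
      simp
    rw [h2] at h1; exact one_ne_zero h1
  · intro ζ hζb hζ0
    rw [mem_ball_zero_iff] at hζb
    rw [sRad_Fmat n d hd2 hdn' ζ hζb hζ0]
    have h0 : 0 < ‖ζ‖ := norm_pos_iff.mpr hζ0
    set r0 := ‖ζ‖ ^ ((d:ℝ)⁻¹) with hr0
    have hr0pos : 0 < r0 := Real.rpow_pos_of_pos h0 _
    have hr01 : r0 < 1 := Real.rpow_lt_one (norm_nonneg ζ) hζb (by positivity)
    have heq : ‖ζ‖ = r0 ^ d := (Real.rpow_inv_natCast_pow (norm_nonneg ζ) (by omega)).symm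
    calc ‖ζ‖ = r0 ^ d := heq
    _ < r0 := pow_lt_self_of_lt_one₀ hr0pos hr01 (by omega)
end

section
/- Let Φ : 𝔻 → M_n(ℂ) be holomorphic and suppose that for every R ∈ (0,1), r(Φ(ζ)) < 1/R whenever |ζ| = R. Then r(Φ(ζ)) ≤ 1 for all ζ ∈ 𝔻. -/
/-!
Instead of the subharmonicity of `ζ ↦ r(Φ ζ)` we use the holomorphic functions `ζ ↦ tr (Φ ζ ^ k)`.
Since `tr (A ^ k)` is the `k`-th power sum of the eigenvalues of `A`, it is bounded by
`n R⁻ᵏ` on the circle `|ζ| = R`, so by the maximum modulus principle, letting `R → 1`,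
`|tr (Φ ζ₀ ^ k)| ≤ n` for every `k`. Bounded power sums force all eigenvalues into the closed
unit disc: if `ρ = max |λᵢ| > 1`, the normalised power sums `∑ (λᵢ / ρ)ᵏ` tend to `0`, while the
Cesàro means of their squared moduli tend to the number of pairs with `λₐ conj λ_b = ρ²`,
which is at least one.
-/

open Metric

open Polynomial Filter Topology Finset ComplexConjugate

namespace Matrix

variable {ι K : Type*} [Fintype ι] [DecidableEq ι] [Field K] [IsAlgClosed K]

theorem card_roots_charpoly (A : Matrix ι ι K) :
    Multiset.card A.charpoly.roots = Fintype.card ι := by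
  rw [← (IsAlgClosed.splits A.charpoly).natDegree_eq_card_roots, charpoly_natDegree_eq_dim]

theorem det_sub_scalar_eq_prod_roots_charpoly (A : Matrix ι ι K) (z : K) :
    (A - scalar ι z).det = (A.charpoly.roots.map (· - z)).prod := by
  rw [← neg_sub, det_neg, ← eval_charpoly,
    (IsAlgClosed.splits A.charpoly).eval_eq_prod_roots_of_monic A.charpoly_monic,
    ← card_roots_charpoly A, ← Multiset.card_map, ← Multiset.prod_map_neg, Multiset.map_map]
  simp

theorem det_aeval_eq_prod_roots_charpoly (A : Matrix ι ι K) {q : K[X]} (hq : q.Monic) :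
    (aeval A q).det = (A.charpoly.roots.map q.eval).prod := by
  let detAeval : K[X] →* K := detMonoidHom.comp (aeval A).toRingHom.toMonoidHom
  have hdet (p : K[X]) : detAeval p = (aeval A p).det := rfl
  have hscalar (z : K) : algebraMap K (Matrix ι ι K) z = scalar ι z := rfl
  have hsplit := IsAlgClosed.splits q
  conv_lhs => rw [← hdet, hsplit.eq_prod_roots_of_monic hq, map_multiset_prod, Multiset.map_map]
  simp only [Function.comp_def, hdet, map_sub, aeval_X, aeval_C, hscalar,
    det_sub_scalar_eq_prod_roots_charpoly, hsplit.eval_eq_prod_roots_of_monic hq]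
  exact Multiset.prod_map_prod_map _ _

theorem roots_charpoly_pow (A : Matrix ι ι K) (k : ℕ) :
    (A ^ k).charpoly.roots = A.charpoly.roots.map (· ^ k) := by
  rcases eq_or_ne k 0 with rfl | hk
  · rw [pow_zero, charpoly_one, roots_pow, ← C_1, roots_X_sub_C, Multiset.nsmul_singleton]
    simp [card_roots_charpoly]
  suffices (A ^ k).charpoly = ((A.charpoly.roots.map (· ^ k)).map fun μ => X - C μ).prod by
    rw [this, roots_multiset_prod_X_sub_C]
  refine Polynomial.funext fun y => ?_
  have hscalar : algebraMap K (Matrix ι ι K) y = scalar ι y := rfl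
  have h := det_aeval_eq_prod_roots_charpoly A (monic_X_pow_sub_C y hk)
  simp only [map_sub, map_pow, aeval_X, aeval_C, hscalar, eval_sub, eval_pow, eval_X,
    eval_C] at h
  rw [eval_charpoly, ← neg_sub, det_neg, h, eval_multiset_prod, Multiset.map_map,
    Multiset.map_map]
  rw [← card_roots_charpoly A, ← Multiset.card_map, ← Multiset.prod_map_neg, Multiset.map_map]
  simp [Function.comp_def]

theorem trace_pow_eq_sum_roots_charpoly (A : Matrix ι ι K) (k : ℕ) :
    (A ^ k).trace = (A.charpoly.roots.map (· ^ k)).sum := by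
  rw [trace_eq_sum_roots_charpoly, roots_charpoly_pow]

end Matrix

section PowerSums

variable {𝕜 ι : Type*} [RCLike 𝕜] [Fintype ι]

theorem tendsto_cesaro_pow {w : 𝕜} (hw : ‖w‖ ≤ 1) :
    Tendsto (fun K : ℕ => (K⁻¹ : ℝ) • ∑ k ∈ range K, w ^ k) atTop
      (𝓝 (if w = 1 then 1 else 0)) := by
  split_ifs with h
  · subst h
    refine tendsto_const_nhds.congr' ?_
    filter_upwards [eventually_ne_atTop 0] with K hK
    simp [RCLike.real_smul_eq_coe_mul, hK]
  · have hbound (K : ℕ) : ‖∑ k ∈ range K, w ^ k‖ ≤ 2 / ‖w - 1‖ := by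
      rw [geom_sum_eq h, norm_div]
      gcongr
      calc ‖w ^ K - 1‖ ≤ ‖w ^ K‖ + ‖(1 : 𝕜)‖ := norm_sub_le _ _
        _ ≤ 2 := by
          rw [norm_pow, norm_one]
          linarith [pow_le_one₀ (norm_nonneg w) hw (n := K)]
    refine squeeze_zero_norm (fun K => ?_)
      (by simpa using (tendsto_inv_atTop_nhds_zero_nat (𝕜 := ℝ)).mul_const (2 / ‖w - 1‖))
    rw [norm_smul, Real.norm_eq_abs, abs_of_nonneg (by positivity)]
    gcongr
    simpa using hbound K

theorem sum_pow_mul_conj_sum_pow (v : ι → 𝕜) (k : ℕ) :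
    (∑ i, v i ^ k) * conj (∑ i, v i ^ k) = ∑ p : ι × ι, (v p.1 * conj (v p.2)) ^ k := by
  simp only [map_sum, map_pow, Finset.sum_mul_sum, mul_pow, Fintype.sum_prod_type]

theorem not_tendsto_sum_pow_nhds_zero {v : ι → 𝕜} (hv : ∀ i, ‖v i‖ ≤ 1) {j : ι}
    (hj : ‖v j‖ = 1) : ¬Tendsto (fun k => ∑ i, v i ^ k) atTop (𝓝 0) := by
  intro h0
  set w : ι × ι → 𝕜 := fun p => v p.1 * conj (v p.2)
  have hw (p : ι × ι) : ‖w p‖ ≤ 1 := by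
    simpa [w] using mul_le_one₀ (hv p.1) (norm_nonneg _) (hv p.2)
  have hwjj : w (j, j) = 1 := by simp [w, RCLike.mul_conj, hj]
  -- Cesàro means of `|∑ v i ^ k|²` count the pairs `p` with `w p = 1`
  have hcount : Tendsto (fun K : ℕ => (K⁻¹ : ℝ) • ∑ k ∈ range K, ∑ p, w p ^ k) atTop
      (𝓝 (#{p | w p = 1} : 𝕜)) := by
    rw [Finset.natCast_card_filter]
    refine (tendsto_finsetSum univ fun p _ => tendsto_cesaro_pow (hw p)).congr fun K => ?_
    rw [Finset.sum_comm, Finset.smul_sum]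
  have hzero : Tendsto (fun K : ℕ => (K⁻¹ : ℝ) • ∑ k ∈ range K, ∑ p, w p ^ k) atTop (𝓝 0) := by
    simp_rw [w, ← sum_pow_mul_conj_sum_pow]
    simpa using (h0.mul ((RCLike.continuous_conj.tendsto 0).comp h0)).cesaro_smul
  have hcard := tendsto_nhds_unique hcount hzero
  rw [Nat.cast_eq_zero, Finset.card_eq_zero, Finset.filter_eq_empty_iff] at hcard
  exact hcard (Finset.mem_univ _) hwjj

theorem norm_le_one_of_forall_norm_sum_pow_le {u : ι → 𝕜} {C : ℝ}
    (h : ∀ k, ‖∑ i, u i ^ k‖ ≤ C) (i : ι) : ‖u i‖ ≤ 1 := by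
  by_contra! hi
  obtain ⟨j, -, hj⟩ := Finset.exists_max_image univ (fun i => ‖u i‖) ⟨i, mem_univ i⟩
  set ρ := ‖u j‖
  have hρ : 1 < ρ := hi.trans_le (hj i (mem_univ i))
  have hρ0 : 0 < ρ := one_pos.trans hρ
  have hnorm (i : ι) : ‖u i / ρ‖ = ‖u i‖ / ρ := by
    rw [norm_div, RCLike.norm_ofReal, abs_of_pos hρ0]
  refine not_tendsto_sum_pow_nhds_zero (v := fun i => u i / ρ) (j := j)
    (fun i => ?_) ?_ ?_
  · rw [hnorm, div_le_one hρ0]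
    exact hj i (mem_univ i)
  · rw [hnorm, div_self hρ0.ne']
  · have hgeom := tendsto_pow_atTop_nhds_zero_of_lt_one (inv_nonneg.2 hρ0.le)
      (inv_lt_one_of_one_lt₀ hρ)
    refine squeeze_zero_norm (fun k => ?_) (by simpa using hgeom.const_mul C)
    simp_rw [div_pow]
    rw [← Finset.sum_div, norm_div, norm_pow, RCLike.norm_ofReal, abs_of_pos hρ0, div_eq_mul_inv]
    gcongr
    exact h k

theorem Multiset.norm_le_one_of_forall_norm_sum_map_pow_le {s : Multiset 𝕜} {C : ℝ}
    (h : ∀ k, ‖(s.map (· ^ k)).sum‖ ≤ C) {x : 𝕜} (hx : x ∈ s) : ‖x‖ ≤ 1 := by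
  classical
  rw [← s.map_univ_coe] at hx
  obtain ⟨y, -, rfl⟩ := Multiset.mem_map.1 hx
  refine norm_le_one_of_forall_norm_sum_pow_le (u := fun y : s => (y : 𝕜)) (C := C) (fun k => ?_) y
  rw [Finset.sum_eq_multiset_sum, Multiset.map_univ (f := (· ^ k))]
  exact h k

end PowerSums

section Holomorphy

variable {𝕜 E ι : Type*} [NontriviallyNormedField 𝕜] [NormedAddCommGroup E] [NormedSpace 𝕜 E]
  [Fintype ι] [DecidableEq ι] {Φ : E → Matrix ι ι 𝕜} {s : Set E}

theorem differentiableOn_matrix_pow_apply (hΦ : ∀ i j, DifferentiableOn 𝕜 (fun z => Φ z i j) s)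
    (k : ℕ) (i j : ι) : DifferentiableOn 𝕜 (fun z => (Φ z ^ k) i j) s := by
  induction k generalizing j with
  | zero =>
    simp only [pow_zero, Matrix.one_apply]
    exact differentiableOn_const _
  | succ k ih =>
    simp only [pow_succ, Matrix.mul_apply]
    exact DifferentiableOn.fun_sum fun l _ => (ih l).mul (hΦ l j)

theorem differentiableOn_trace_matrix_pow
    (hΦ : ∀ i j, DifferentiableOn 𝕜 (fun z => Φ z i j) s) (k : ℕ) :
    DifferentiableOn 𝕜 (fun z => (Φ z ^ k).trace) s :=
  DifferentiableOn.fun_sum fun i _ => differentiableOn_matrix_pow_apply hΦ k i i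

end Holomorphy

theorem Complex.norm_le_of_forall_norm_eq_le {F : Type*} [NormedAddCommGroup F]
    [NormedSpace ℂ F] {f : ℂ → F} {R M : ℝ} (hR : 0 < R)
    (hf : DifferentiableOn ℂ f (closedBall 0 R)) (hM : ∀ z, ‖z‖ = R → ‖f z‖ ≤ M) {z : ℂ}
    (hz : ‖z‖ ≤ R) : ‖f z‖ ≤ M := by
  refine Complex.norm_le_of_forall_mem_frontier_norm_le (U := ball 0 R) isBounded_ball
    (DifferentiableOn.diffContOnCl ?_) (fun w hw => hM w ?_) ?_
  · rwa [closure_ball 0 hR.ne']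
  · rwa [frontier_ball 0 hR.ne', mem_sphere_zero_iff_norm] at hw
  · rwa [closure_ball 0 hR.ne', mem_closedBall_zero_iff]

section SpectralRadius

variable {n : ℕ}

theorem sRad_nonneg (A : Matrix (Fin n) (Fin n) ℂ) : 0 ≤ sRad A :=
  Real.sSup_nonneg <| by
    rintro _ ⟨μ, -, rfl⟩
    exact norm_nonneg μ

theorem norm_le_sRad {A : Matrix (Fin n) (Fin n) ℂ} {μ : ℂ} (hμ : μ ∈ spectrum ℂ A) :
    ‖μ‖ ≤ sRad A :=
  le_csSup (A.finite_spectrum.image _).bddAbove (Set.mem_image_of_mem _ hμ)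

theorem mem_spectrum_iff_mem_roots_charpoly {A : Matrix (Fin n) (Fin n) ℂ} {μ : ℂ} :
    μ ∈ spectrum ℂ A ↔ μ ∈ A.charpoly.roots := by
  rw [Matrix.mem_spectrum_iff_isRoot_charpoly, mem_roots A.charpoly_monic.ne_zero]

theorem norm_trace_pow_le (A : Matrix (Fin n) (Fin n) ℂ) (k : ℕ) :
    ‖(A ^ k).trace‖ ≤ n * sRad A ^ k := by
  rw [Matrix.trace_pow_eq_sum_roots_charpoly]
  calc ‖(A.charpoly.roots.map (· ^ k)).sum‖
      ≤ ((A.charpoly.roots.map (· ^ k)).map (‖·‖)).sum := norm_multiset_sum_le _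
    _ ≤ Multiset.card ((A.charpoly.roots.map (· ^ k)).map (‖·‖)) • sRad A ^ k := by
      refine Multiset.sum_le_card_nsmul _ _ fun x hx => ?_
      obtain ⟨μ, hμ, rfl⟩ := Multiset.mem_map.1 (Multiset.map_map _ _ _ ▸ hx)
      rw [Function.comp_apply, norm_pow]
      exact pow_le_pow_left₀ (norm_nonneg μ)
        (norm_le_sRad (mem_spectrum_iff_mem_roots_charpoly.2 hμ)) k
    _ = n * sRad A ^ k := by
      simp [Matrix.card_roots_charpoly]

theorem sRad_le_one_of_forall_norm_trace_pow_le (A : Matrix (Fin n) (Fin n) ℂ) {C : ℝ}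
    (h : ∀ k, ‖(A ^ k).trace‖ ≤ C) : sRad A ≤ 1 := by
  refine Real.sSup_le ?_ zero_le_one
  rintro _ ⟨μ, hμ, rfl⟩
  refine Multiset.norm_le_one_of_forall_norm_sum_map_pow_le (C := C) (fun k => ?_)
    (mem_spectrum_iff_mem_roots_charpoly.1 hμ)
  rw [← Matrix.trace_pow_eq_sum_roots_charpoly]
  exact h k

end SpectralRadius

/-- If `Φ : 𝔻 → M_n(ℂ)` is holomorphic and `r(Φ(ζ)) < 1/R` whenever `|ζ| = R ∈ (0,1)`,
then `r(Φ(ζ)) ≤ 1` on all of `𝔻`. -/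
theorem stmt7 {n : ℕ} (Φ : ℂ → Matrix (Fin n) (Fin n) ℂ)
    (hol : ∀ i j : Fin n, DifferentiableOn ℂ (fun ζ => Φ ζ i j) (ball (0 : ℂ) 1))
    (hbd : ∀ R : ℝ, 0 < R → R < 1 → ∀ ζ : ℂ, ‖ζ‖ = R → sRad (Φ ζ) < 1 / R) :
    ∀ ζ ∈ ball (0 : ℂ) 1, sRad (Φ ζ) ≤ 1 := by
  intro ζ₀ hζ₀
  rw [mem_ball_zero_iff] at hζ₀
  refine sRad_le_one_of_forall_norm_trace_pow_le _ (C := n) fun k => ?_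
  have hR : ∀ R ∈ Set.Ioo ‖ζ₀‖ 1, ‖(Φ ζ₀ ^ k).trace‖ ≤ n * (1 / R) ^ k := by
    rintro R ⟨hζ₀R, hR1⟩
    have hR0 : 0 < R := (norm_nonneg ζ₀).trans_lt hζ₀R
    refine Complex.norm_le_of_forall_norm_eq_le hR0
      ((differentiableOn_trace_matrix_pow hol k).mono (closedBall_subset_ball hR1))
      (fun ζ hζ => ?_) hζ₀R.le
    grw [norm_trace_pow_le, (hbd R hR0 hR1 ζ hζ).le]
    exact sRad_nonneg _
  have hlim : Tendsto (fun R : ℝ => (n : ℝ) * (1 / R) ^ k) (𝓝[<] 1) (𝓝 n) := by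
    have hcont : ContinuousAt (fun R : ℝ => (n : ℝ) * (1 / R) ^ k) 1 :=
      continuousAt_const.mul ((continuousAt_const.div continuousAt_id one_ne_zero).pow k)
    simpa using hcont.tendsto.mono_left nhdsWithin_le_nhds
  exact ge_of_tendsto hlim (eventually_of_mem (Ioo_mem_nhdsLT hζ₀) hR)
end
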